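/- arXiv:2208.10480 — 2 statements merged into one kernel-verified Lean document; each statement's English description precedes it below -/
import Mathlib

section
/- Let A be a finite nonempty alphabet. If L is a regular language over A that belongs to the Boolean subalgebra of sets of words generated by the languages that are Π₁_d[N]-definable for some d ≥ 1 (i.e., L is obtained from such languages by finitely many unions, intersections, and complements), then L belongs to the Boolean subalgebra generated by the languages that are Π₁_d[Reg]-definable for some d ≥ 1. -/
def NumPredEncoding {d : ℕ} (N : (Fin d → ℕ) → ℕ → Prop) :
    Language (Finset (Fin d)) :=
  {u | ∃ p : Fin d → Fin u.length,
    (∀ j : Fin d, ∀ q : Fin u.length, j ∈ u.get q ↔ q = p j) ∧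
    N (fun j => (p j : ℕ)) u.length}

def IsRegularNumPred {d : ℕ} (N : (Fin d → ℕ) → ℕ → Prop) : Prop :=
  (NumPredEncoding N).IsRegular

def Pi1NDefinable (A : Type*) (d : ℕ) (L : Set (List A)) : Prop :=
  ∃ N : (Fin d → A) → (Fin d → ℕ) → ℕ → Prop,
    ∀ w : List A, w ∈ L ↔ ∀ i : Fin d → Fin w.length,
      N (fun j => w.get (i j)) (fun j => (i j : ℕ)) w.length

def Pi1RegDefinable (A : Type*) (d : ℕ) (L : Set (List A)) : Prop :=
  ∃ N : (Fin d → A) → (Fin d → ℕ) → ℕ → Prop,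
    (∀ a : Fin d → A, IsRegularNumPred (N a)) ∧
    ∀ w : List A, w ∈ L ↔ ∀ i : Fin d → Fin w.length,
      N (fun j => w.get (i j)) (fun j => (i j : ℕ)) w.length

inductive BoolComb {α : Type*} (G : Set α → Prop) : Set α → Prop
  | base (s : Set α) : G s → BoolComb G s
  | compl (s : Set α) : BoolComb G s → BoolComb G sᶜ
  | union (s t : Set α) : BoolComb G s → BoolComb G t → BoolComb G (s ∪ t)
  | inter (s t : Set α) : BoolComb G s → BoolComb G t → BoolComb G (s ∩ t)


/-!
Write `cl_d K` (`sampleClosure d K`) for the words `w` such that any `d` positions of `w` can be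
filled in to a word of `K` of the same length. A Π₁_d[N]-definable language is `cl_d`-closed, and
for regular `K` the language `cl_d K` is regular and Π₁_d[Reg]-definable through the numerical
predicate "some word of `K` of length `n` carries the letters `a` at the positions `p`".

A Boolean combination `L` of closed languages is determined by which of finitely many
`δ`-closed generators `F` a word belongs to. Put `E = δ * 2 ^ |F| + 1` and consider the difference
chain `K₀ = L`, `Kₘ₊₁ = cl_E Kₘ \ Kₘ`, for which `Kₘ = cl_E Kₘ \ Kₘ₊₁`. Since a union of at most
`2 ^ |F|` `δ`-closed sets is `E`-closed up to the empty word, for every nonempty `w ∈ cl_E X` some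
`x ∈ X` has all its generators containing `w`. Consecutive members of the chain lie on opposite
sides of `L`, so these inclusions of generator sets are strict, and a nonempty word of `Kₘ` lies
in at least `m` generators. Hence `K_{|F|+1} ⊆ {[]}`, and unwinding the chain writes `L` as a
Boolean combination of the regular closures `cl_E Kₘ` and `{[]} = cl_1 ∅`.
-/

namespace List

variable {α β : Type*}

theorem mem_image_map_fst_iff {S : Set (List (α × β))} {w : List α} :
    w ∈ map Prod.fst '' S ↔ ∃ u : List β, u.length = w.length ∧ w.zip u ∈ S := by
  constructor
  · rintro ⟨z, hz, rfl⟩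
    exact ⟨z.map Prod.snd, by simp, by rwa [← unzip_fst, ← unzip_snd, zip_unzip]⟩
  · rintro ⟨u, hu, hS⟩
    exact ⟨w.zip u, hS, map_fst_zip hu.ge⟩

theorem mem_image_map_snd_iff {S : Set (List (α × β))} {u : List β} :
    u ∈ map Prod.snd '' S ↔ ∃ x : List α, x.length = u.length ∧ x.zip u ∈ S := by
  constructor
  · rintro ⟨z, hz, rfl⟩
    exact ⟨z.map Prod.fst, by simp, by rwa [← unzip_fst, ← unzip_snd, zip_unzip]⟩
  · rintro ⟨x, hx, hS⟩
    exact ⟨x.zip u, hS, map_snd_zip hx.ge⟩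

end List

namespace Language

variable {α β : Type*}

theorem isRegular_setOf_forall_mem (P : α → Prop) :
    IsRegular ({x | ∀ a ∈ x, P a} : Language α) := by
  classical
  let M : DFA α Bool := ⟨fun b a => b && decide (P a), true, {true}⟩
  have hM : ∀ x b, M.evalFrom b x = (b && decide (∀ a ∈ x, P a)) := by
    intro x
    induction x with
    | nil => simp
    | cons a x ih => intro b; simp [M, ih, Bool.and_assoc]
  exact ⟨Bool, inferInstance, M, by ext x; simp [DFA.accepts, DFA.mem_acceptsFrom, hM, M]; rfl⟩

protected theorem IsRegular.preimage_map {L : Language β} (h : L.IsRegular) (f : α → β) :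
    IsRegular (List.map f ⁻¹' L : Language α) := by
  obtain ⟨σ, _, M, rfl⟩ := h
  exact ⟨σ, inferInstance, M.comap f, M.accepts_comap f⟩

protected theorem IsRegular.image_map {L : Language α} (h : L.IsRegular) (f : α → β) :
    IsRegular (List.map f '' L : Language β) := by
  obtain ⟨σ, _, M, rfl⟩ := h
  let N : NFA β σ := ⟨fun s b => {t | ∃ a, f a = b ∧ M.step s a = t}, {M.start}, M.accept⟩
  have hN : ∀ y S, y ∈ N.acceptsFrom S ↔ ∃ s ∈ S, ∃ x ∈ M.acceptsFrom s, x.map f = y := by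
    intro y
    induction y with
    | nil => simp [N, DFA.mem_acceptsFrom]
    | cons b y ih => simp [N, ih, NFA.mem_stepSet, List.map_eq_cons_iff]; aesop
  refine ⟨Set σ, inferInstance, N.toDFA, ?_⟩
  ext y
  rw [NFA.toDFA_correct, NFA.accepts_eq_acceptsFrom_start, hN]
  simp [N, DFA.accepts]
  rfl

end Language

section Marking

variable {d : ℕ}

/-- The condition in `NumPredEncoding`, with positions as natural numbers: `u` carries the mark
`j` exactly at position `p j`. -/
structure IsMarking (u : List (Finset (Fin d))) (p : Fin d → ℕ) : Prop where
  lt_length : ∀ j, p j < u.length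
  mem_iff : ∀ j q (hq : q < u.length), j ∈ u[q] ↔ q = p j

theorem mem_numPredEncoding {N : (Fin d → ℕ) → ℕ → Prop} {u : List (Finset (Fin d))} :
    u ∈ NumPredEncoding N ↔ ∃ p, IsMarking u p ∧ N p u.length := by
  constructor
  · rintro ⟨p, hp, hN⟩
    refine ⟨fun j => p j, ⟨fun j => (p j).isLt, fun j q hq => ?_⟩, hN⟩
    simpa [Fin.ext_iff] using hp j ⟨q, hq⟩
  · rintro ⟨p, hp, hN⟩
    refine ⟨fun j => ⟨p j, hp.lt_length j⟩, fun j q => ?_, hN⟩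
    simpa [Fin.ext_iff] using hp.mem_iff j q q.isLt

theorem exists_isMarking {n : ℕ} {p : Fin d → ℕ} (hp : ∀ j, p j < n) :
    ∃ u : List (Finset (Fin d)), u.length = n ∧ IsMarking u p :=
  ⟨List.ofFn fun q : Fin n => Finset.univ.filter (p · = q), by simp,
    ⟨by simpa, fun j q hq => by simp [eq_comm]⟩⟩

theorem exists_isMarking_iff {u : List (Finset (Fin d))} :
    (∃ p, IsMarking u p) ↔ u.Pairwise Disjoint ∧ ∀ j, ∃ s ∈ u, j ∈ s := by
  constructor
  · rintro ⟨p, hp⟩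
    refine ⟨List.pairwise_iff_getElem.mpr fun q r hq hr hqr => Finset.disjoint_left.mpr ?_,
      fun j => ⟨_, List.getElem_mem (hp.lt_length j), (hp.mem_iff j _ _).mpr rfl⟩⟩
    intro j hjq hjr
    rw [hp.mem_iff] at hjq hjr
    omega
  · rintro ⟨hdisj, hcover⟩
    have : ∀ j, ∃ q, ∃ hq : q < u.length, j ∈ u[q] := fun j => by
      obtain ⟨s, hs, hj⟩ := hcover j
      obtain ⟨q, hq, rfl⟩ := List.mem_iff_getElem.mp hs
      exact ⟨q, hq, hj⟩
    choose p hlt hp using this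
    refine ⟨p, hlt, fun j q hq => ⟨fun hj => ?_, by rintro rfl; exact hp j⟩⟩
    by_contra hne
    rcases Nat.lt_or_gt_of_ne hne with h | h
    · exact Finset.disjoint_left.mp (List.pairwise_iff_getElem.mp hdisj _ _ hq (hlt j) h) hj (hp j)
    · exact Finset.disjoint_left.mp (List.pairwise_iff_getElem.mp hdisj _ _ (hlt j) hq h) (hp j) hj

theorem IsMarking.forall_mem_iff {γ : Type*} {mk : γ → Finset (Fin d)} {R : Fin d → γ → Prop}
    {z : List γ} {p : Fin d → ℕ} (hp : IsMarking (z.map mk) p) :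
    (∀ c ∈ z, ∀ j ∈ mk c, R j c) ↔ ∀ j, R j (z[p j]'(by simpa using hp.lt_length j)) := by
  constructor
  · intro h j
    have := (hp.mem_iff j (p j) (hp.lt_length j)).mpr rfl
    exact h _ (List.getElem_mem _) j (by simpa using this)
  · intro h c hc j hj
    obtain ⟨q, hq, rfl⟩ := List.mem_iff_getElem.mp hc
    obtain rfl : q = p j := (hp.mem_iff j q (by simpa using hq)).mp (by simpa using hj)
    exact h j

variable (d) in
def markingLang : Set (List (Finset (Fin d))) := {u | ∃ p, IsMarking u p}

variable (d) in
def markingDFA : DFA (Finset (Fin d)) (Finset (Fin d) × Bool) where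
  step m s := (m.1 ∪ s, m.2 && decide (Disjoint m.1 s))
  start := (∅, true)
  accept := {(Finset.univ, true)}

theorem markingDFA_evalFrom (u : List (Finset (Fin d))) (m : Finset (Fin d)) (b : Bool) :
    (markingDFA d).evalFrom (m, b) u =
      (m ∪ ({j | ∃ s ∈ u, j ∈ s} : Finset (Fin d)), b && decide ((m :: u).Pairwise Disjoint)) := by
  induction u generalizing m b with
  | nil => simp
  | cons s u ih =>
    rw [DFA.evalFrom_cons, show (markingDFA d).step (m, b) s = (m ∪ s, b && decide (Disjoint m s))
      from rfl, ih, Prod.mk.injEq]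
    constructor
    · ext j
      simp
    · simp only [List.pairwise_cons, List.mem_cons, forall_eq_or_imp, Finset.disjoint_union_left]
      rw [Bool.eq_iff_iff]
      simp [forall_and]
      tauto

theorem isRegular_markingLang :
    Language.IsRegular (markingLang d : Language (Finset (Fin d))) := by
  refine ⟨_, inferInstance, markingDFA d, ?_⟩
  ext u
  change _ ↔ ∃ p, IsMarking u p
  rw [exists_isMarking_iff, DFA.mem_accepts, DFA.eval,
    show (markingDFA d).start = (∅, true) from rfl, markingDFA_evalFrom]
  simp [markingDFA, Finset.eq_univ_iff_forall, and_comm]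

end Marking

section SampleClosure

variable {A : Type*} {d e : ℕ} {K K' M X Y : Set (List A)}

def sampleClosure (d : ℕ) (K : Set (List A)) : Set (List A) :=
  {w | ∀ i : Fin d → Fin w.length, ∃ x ∈ K, x.length = w.length ∧
    ∀ j, x[(i j : ℕ)]? = w[(i j : ℕ)]?}

theorem subset_sampleClosure : K ⊆ sampleClosure d K :=
  fun w hw _ => ⟨w, hw, rfl, fun _ => rfl⟩

theorem sampleClosure_mono (h : K ⊆ K') : sampleClosure d K ⊆ sampleClosure d K' := by
  intro w hw i
  obtain ⟨x, hx, hlen, hagree⟩ := hw i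
  exact ⟨x, h hx, hlen, hagree⟩

theorem sampleClosure_sampleClosure_subset :
    sampleClosure d (sampleClosure d K) ⊆ sampleClosure d K := by
  intro w hw i
  obtain ⟨x, hx, hlen, hagree⟩ := hw i
  obtain ⟨y, hy, hlen', hagree'⟩ := hx fun j => (i j).cast hlen.symm
  exact ⟨y, hy, hlen'.trans hlen, fun j => (hagree' j).trans (hagree j)⟩

theorem sampleClosure_subset_of_le (hd : 0 < d) (hde : d ≤ e) :
    sampleClosure e K ⊆ sampleClosure d K := by
  intro w hw i
  obtain ⟨x, hx, hlen, hagree⟩ := hw fun j => if h : (j : ℕ) < d then i ⟨j, h⟩ else i ⟨0, hd⟩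
  exact ⟨x, hx, hlen, fun j => by simpa using hagree (j.castLE hde)⟩

theorem sampleClosure_add_union_subset :
    sampleClosure (d + e) (X ∪ Y) ⊆ sampleClosure d X ∪ sampleClosure e Y := by
  intro w hw
  by_contra hn
  simp only [Set.mem_union, sampleClosure, Set.mem_ofPred_eq, not_or, not_forall, not_exists,
    not_and] at hn
  obtain ⟨⟨i₁, h₁⟩, ⟨i₂, h₂⟩⟩ := hn
  obtain ⟨x, hx | hx, hlen, hagree⟩ := hw (Fin.append i₁ i₂)
  · obtain ⟨j, hj⟩ := by simpa using h₁ x hx hlen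
    exact hj (by simpa using hagree (Fin.castAdd e j))
  · obtain ⟨j, hj⟩ := by simpa using h₂ x hx hlen
    exact hj (by simpa using hagree (Fin.natAdd d j))

theorem nil_mem_sampleClosure (hd : 0 < d) : [] ∈ sampleClosure d K :=
  fun i => (i ⟨0, hd⟩).elim0

theorem sampleClosure_one_empty : sampleClosure 1 (∅ : Set (List A)) = {[]} := by
  ext w
  refine ⟨fun hw => ?_, fun hw => hw ▸ nil_mem_sampleClosure one_pos⟩
  cases w with
  | nil => rfl
  | cons a w => simpa using hw fun _ => 0

def sampleClosureOperator (d : ℕ) : ClosureOperator (Set (List A)) :=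
  .mk' (sampleClosure d) (fun _ _ => sampleClosure_mono) (fun _ => subset_sampleClosure)
    (fun _ => sampleClosure_sampleClosure_subset)

theorem Pi1NDefinable.sampleClosure_subset (h : Pi1NDefinable A d M) :
    sampleClosure d M ⊆ M := by
  obtain ⟨N, hN⟩ := h
  intro w hw
  rw [hN]
  intro i
  obtain ⟨x, hx, hlen, hagree⟩ := hw i
  have hget : (fun j => x.get ((i j).cast hlen.symm)) = fun j => w.get (i j) := funext fun j => by
    have := hagree j
    rwa [List.getElem?_eq_getElem (i j).isLt,
      List.getElem?_eq_getElem (by rw [hlen]; exact (i j).isLt), Option.some_inj] at this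
  convert (hN x).mp hx (fun j => (i j).cast hlen.symm) using 1
  · exact hget.symm
  · rfl
  · exact hlen.symm

end SampleClosure

section Regularity

variable {A : Type*} {d : ℕ} {K : Set (List A)}

def canonicalNumPred (K : Set (List A)) (a : Fin d → A) (p : Fin d → ℕ) (n : ℕ) : Prop :=
  ∃ x ∈ K, x.length = n ∧ ∀ j, x[p j]? = some (a j)

theorem mem_sampleClosure_iff_canonicalNumPred {w : List A} :
    w ∈ sampleClosure d K ↔ ∀ i : Fin d → Fin w.length,
      canonicalNumPred K (fun j => w.get (i j)) (fun j => i j) w.length := by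
  simp [sampleClosure, canonicalNumPred]

theorem numPredEncoding_canonicalNumPred (K : Set (List A)) (a : Fin d → A) :
    NumPredEncoding (canonicalNumPred K a) = List.map Prod.snd ''
      (List.map Prod.fst ⁻¹' K ∩ List.map Prod.snd ⁻¹' markingLang d ∩
        {z | ∀ c ∈ z, ∀ j ∈ c.2, c.1 = a j}) := by
  refine Set.ext fun u => mem_numPredEncoding.trans ?_
  rw [List.mem_image_map_snd_iff]
  constructor
  · rintro ⟨p, hp, x, hxK, hx, ha⟩
    have hp' : IsMarking ((x.zip u).map Prod.snd) p := by rwa [List.map_snd_zip hx.ge]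
    have hc : ∀ c ∈ x.zip u, ∀ j ∈ c.2, c.1 = a j :=
      (hp'.forall_mem_iff (R := fun j c => c.1 = a j)).mpr fun j => by
        have hj : p j < x.length := hx ▸ hp.lt_length j
        simpa [List.getElem?_eq_getElem hj] using ha j
    exact ⟨x, hx, ⟨by rwa [Set.mem_preimage, List.map_fst_zip hx.le], ⟨p, hp'⟩⟩, hc⟩
  · rintro ⟨x, hx, ⟨hxK, p, hp⟩, hc : ∀ c ∈ x.zip u, ∀ j ∈ c.2, c.1 = a j⟩
    rw [Set.mem_preimage, List.map_fst_zip hx.le] at hxK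
    refine ⟨p, by rwa [List.map_snd_zip hx.ge] at hp, x, hxK, hx, fun j => ?_⟩
    have hj : p j < x.length := by simpa [hx] using hp.lt_length j
    simpa [List.getElem?_eq_getElem hj] using
      (hp.forall_mem_iff (R := fun j c => c.1 = a j)).mp hc j

theorem isRegularNumPred_canonicalNumPred (hK : Language.IsRegular (K : Language A))
    (a : Fin d → A) : IsRegularNumPred (canonicalNumPred K a) := by
  rw [IsRegularNumPred, numPredEncoding_canonicalNumPred]
  exact (((hK.preimage_map _).inf (isRegular_markingLang.preimage_map _)).inf
    (Language.isRegular_setOf_forall_mem _)).image_map _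

theorem pi1RegDefinable_sampleClosure (hK : Language.IsRegular (K : Language A)) :
    Pi1RegDefinable A d (sampleClosure d K) :=
  ⟨canonicalNumPred K, isRegularNumPred_canonicalNumPred hK,
    fun _ => mem_sampleClosure_iff_canonicalNumPred⟩

theorem mem_sampleClosure_iff_forall_isMarking {w : List A} :
    w ∈ sampleClosure d K ↔ ∀ u : List (Finset (Fin d)), u.length = w.length → ∀ p,
      IsMarking u p → ∃ x ∈ K, x.length = w.length ∧ ∀ j, x[p j]? = w[p j]? := by
  refine ⟨fun hw u hu p hp => hw fun j => ⟨p j, hu ▸ hp.lt_length j⟩, fun hw i => ?_⟩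
  obtain ⟨u, hu, hp⟩ := exists_isMarking fun j => (i j).isLt
  exact hw u hu _ hp

/-- A word lies outside `sampleClosure d K` iff some marking of `d` of its positions admits no
word of `K` agreeing with it there; the inner image guesses that word as an extra track. -/
theorem sampleClosure_eq_compl_image : sampleClosure d K =
    (List.map Prod.fst '' (List.map Prod.snd ⁻¹' markingLang d ∩
      (List.map Prod.snd '' (List.map Prod.fst ⁻¹' K ∩
        {t | ∀ c ∈ t, ∀ j ∈ c.2.2, c.1 = c.2.1}))ᶜ))ᶜ := by
  ext w
  rw [mem_sampleClosure_iff_forall_isMarking]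
  simp only [Set.mem_compl_iff, List.mem_image_map_fst_iff, Set.mem_inter_iff, not_exists,
    not_and, not_not]
  refine forall_congr' fun u => forall_congr' fun hu => ?_
  rw [Set.mem_preimage, List.map_snd_zip hu.le, List.mem_image_map_snd_iff]
  simp only [markingLang, Set.mem_ofPred_eq, forall_exists_index]
  refine forall_congr' fun p => forall_congr' fun hp => ?_
  simp only [List.length_zip, hu, min_self, Set.mem_inter_iff, Set.mem_preimage]
  refine exists_congr fun x => ?_
  rw [and_left_comm]
  refine and_congr_right fun hx => ?_
  rw [List.map_fst_zip (by simp [hx, hu])]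
  refine and_congr_right fun _ => ?_
  have hmarks : ((x.zip (w.zip u)).map Prod.snd).map Prod.snd = u := by
    rw [List.map_snd_zip (by simp [hx, hu]), List.map_snd_zip hu.le]
  have hlt := hp.lt_length
  rw [← hmarks, List.map_map] at hp
  refine Iff.trans ?_ (hp.forall_mem_iff (R := fun _ c => c.1 = c.2.1)).symm
  refine forall_congr' fun j => ?_
  have hj : p j < w.length := hu ▸ hlt j
  simp [List.getElem?_eq_getElem hj, List.getElem?_eq_getElem (hx ▸ hj)]

theorem isRegular_sampleClosure (hK : Language.IsRegular (K : Language A)) :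
    Language.IsRegular (sampleClosure d K : Language A) := by
  rw [sampleClosure_eq_compl_image]
  have hY := ((hK.preimage_map Prod.fst).inf (Language.isRegular_setOf_forall_mem
    fun c : A × A × Finset (Fin d) => ∀ j ∈ c.2.2, c.1 = c.2.1)).image_map Prod.snd
  exact (((isRegular_markingLang.preimage_map Prod.snd).inf hY.compl).image_map Prod.fst).compl

end Regularity

section DiffChain

variable {α : Type*} (c : ClosureOperator (Set α)) (S : Set α)

/-- The difference chain of `S`: with `Kₘ = diffChain c S m`, `S = c K₀ \ (c K₁ \ (c K₂ \ ⋯))`. -/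
def diffChain : ℕ → Set α
  | 0 => S
  | m + 1 => c (diffChain m) \ diffChain m

variable {c S}

theorem diffChain_eq_closure_diff (m : ℕ) :
    diffChain c S m = c (diffChain c S m) \ diffChain c S (m + 1) := by
  ext w
  have := @c.le_closure _ _ (diffChain c S m) w
  simp only [diffChain, Set.mem_sdiff]
  tauto

theorem diffChain_add_two_subset (m : ℕ) : diffChain c S (m + 2) ⊆ diffChain c S m := by
  rintro w ⟨hw, hw'⟩
  by_contra h
  exact hw' ⟨c.le_closure_iff.mp Set.sdiff_subset hw, h⟩

theorem diffChain_two_mul_subset (m : ℕ) :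
    diffChain c S (2 * m) ⊆ S ∧ diffChain c S (2 * m + 1) ⊆ Sᶜ := by
  induction m with
  | zero => exact ⟨subset_rfl, fun _ hw => hw.2⟩
  | succ m ih =>
    exact ⟨(diffChain_add_two_subset _).trans ih.1, (diffChain_add_two_subset _).trans ih.2⟩

theorem mem_iff_notMem_of_mem_diffChain {m : ℕ} {x w : α} (hx : x ∈ diffChain c S m)
    (hw : w ∈ diffChain c S (m + 1)) : x ∈ S ↔ w ∉ S := by
  obtain ⟨k, rfl | rfl⟩ := Nat.even_or_odd' m
  · have := (diffChain_two_mul_subset k).1 hx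
    have := (diffChain_two_mul_subset (c := c) k).2 hw
    tauto
  · have := (diffChain_two_mul_subset k).2 hx
    have := (diffChain_two_mul_subset (c := c) (k + 1)).1 hw
    tauto

end DiffChain

section Termination

variable {A : Type*}

/-- The empty word lies in every closure, even of `∅`. -/
theorem sampleClosure_biUnion_subset {ι : Type*} {δ : ℕ} {F : ι → Set (List A)} (s : Finset ι)
    (hF : ∀ k ∈ s, sampleClosure δ (F k) ⊆ F k) :
    sampleClosure (δ * s.card + 1) (⋃ k ∈ s, F k) ⊆ (⋃ k ∈ s, F k) ∪ {[]} := by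
  classical
  induction s using Finset.induction_on with
  | empty => simp [sampleClosure_one_empty]
  | insert a s ha ih =>
    rw [Finset.card_insert_of_notMem ha, Finset.set_biUnion_insert,
      show δ * (s.card + 1) + 1 = δ + (δ * s.card + 1) by ring]
    refine sampleClosure_add_union_subset.trans ?_
    rw [Set.union_assoc]
    exact Set.union_subset_union (hF a (by simp)) (ih fun k hk => hF k (by simp [hk]))

theorem exists_mem_imp_of_mem_sampleClosure {δ : ℕ} {F : Finset (Set (List A))}
    (hF : ∀ s ∈ F, sampleClosure δ s ⊆ s) {X : Set (List A)} {w : List A}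
    (hw : w ∈ sampleClosure (δ * 2 ^ F.card + 1) X) (hne : w ≠ []) :
    ∃ x ∈ X, ∀ s ∈ F, x ∈ s → w ∈ s := by
  classical
  set 𝒯 := F.powerset.filter fun T => ∃ x ∈ X, ∀ s ∈ F, x ∈ s → s ∈ T
  have hcover : X ⊆ ⋃ T ∈ 𝒯, ⋂ s ∈ T, s := fun x hx =>
    Set.mem_biUnion (x := F.filter (x ∈ ·))
      (by simpa [𝒯] using ⟨x, hx, fun s hs hxs => ⟨hs, hxs⟩⟩) (by simp)
  have hclosed : ∀ T ∈ 𝒯, sampleClosure δ (⋂ s ∈ T, s) ⊆ ⋂ s ∈ T, s := fun T hT =>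
    Set.subset_iInter₂ fun s hs => (sampleClosure_mono (Set.biInter_subset_of_mem hs)).trans
      (hF s (Finset.mem_powerset.mp (Finset.mem_filter.mp hT).1 hs))
  have hcard : 𝒯.card ≤ 2 ^ F.card :=
    (Finset.card_filter_le _ _).trans (Finset.card_powerset F).le
  have hw' := sampleClosure_biUnion_subset 𝒯 hclosed
    (sampleClosure_mono hcover (sampleClosure_subset_of_le (by omega) (by gcongr) hw))
  obtain ⟨T, hT, hwT⟩ := Set.mem_iUnion₂.mp (hw'.resolve_right hne)
  obtain ⟨x, hx, hxT⟩ := (Finset.mem_filter.mp hT).2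
  exact ⟨x, hx, fun s hs hxs => Set.mem_iInter₂.mp hwT s (hxT s hs hxs)⟩

theorem diffChain_subset_nil {δ : ℕ} (hδ : 0 < δ) {F : Finset (Set (List A))}
    (hF : ∀ s ∈ F, sampleClosure δ s ⊆ s) {L : Set (List A)}
    (hL : ∀ x y, (∀ s ∈ F, x ∈ s ↔ y ∈ s) → (x ∈ L ↔ y ∈ L)) :
    diffChain (sampleClosureOperator (δ * 2 ^ F.card + 1)) L (F.card + 1) ⊆ {[]} := by
  classical
  set K := diffChain (sampleClosureOperator (δ * 2 ^ F.card + 1)) L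
  have key : ∀ m, ∀ w ∈ K m, w ≠ [] → m ≤ (F.filter (w ∈ ·)).card := by
    intro m
    induction m with
    | zero => simp
    | succ m ih =>
      intro w hw hne
      obtain ⟨x, hx, hxw⟩ := exists_mem_imp_of_mem_sampleClosure hF hw.1 hne
      have hsub : F.filter (x ∈ ·) ⊆ F.filter (w ∈ ·) := fun s => by
        simpa only [Finset.mem_filter] using fun h => ⟨h.1, hxw s h.1 h.2⟩
      have hne' : F.filter (x ∈ ·) ≠ F.filter (w ∈ ·) := by
        intro h
        have := hL x w fun s hs => by simpa [hs] using congrArg (s ∈ ·) h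
        have := mem_iff_notMem_of_mem_diffChain hx hw
        tauto
      have hlt := Finset.card_lt_card (Finset.ssubset_iff_subset_ne.mpr ⟨hsub, hne'⟩)
      by_cases hx0 : x = []
      · subst hx0
        rw [Finset.filter_true_of_mem fun s hs => hF s hs (nil_mem_sampleClosure hδ)] at hlt
        exact absurd (Finset.card_filter_le F _) hlt.not_ge
      · exact (ih x hx hx0).trans_lt hlt
  intro w hw
  by_contra hne
  have := key _ w hw hne
  have := Finset.card_filter_le F (w ∈ ·)
  omega

end Termination

section Collapse

variable {A : Type*}

theorem BoolComb.exists_finset_determining {α : Type*} {G : Set α → Prop} {S : Set α}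
    (h : BoolComb G S) : ∃ F : Finset (Set α), (∀ s ∈ F, G s) ∧
      ∀ x y, (∀ s ∈ F, x ∈ s ↔ y ∈ s) → (x ∈ S ↔ y ∈ S) := by
  classical
  induction h with
  | base s hs => exact ⟨{s}, by simpa, fun x y hxy => hxy s (Finset.mem_singleton_self s)⟩
  | compl s _ ih =>
    obtain ⟨F, hG, hF⟩ := ih
    exact ⟨F, hG, fun x y hxy => not_congr (hF x y hxy)⟩
  | union s t _ _ ihs iht =>
    obtain ⟨F₁, hG₁, hF₁⟩ := ihs
    obtain ⟨F₂, hG₂, hF₂⟩ := iht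
    refine ⟨F₁ ∪ F₂, by simpa [or_imp, forall_and] using ⟨hG₁, hG₂⟩, fun x y hxy => ?_⟩
    exact or_congr (hF₁ x y fun s hs => hxy s (by simp [hs]))
      (hF₂ x y fun s hs => hxy s (by simp [hs]))
  | inter s t _ _ ihs iht =>
    obtain ⟨F₁, hG₁, hF₁⟩ := ihs
    obtain ⟨F₂, hG₂, hF₂⟩ := iht
    refine ⟨F₁ ∪ F₂, by simpa [or_imp, forall_and] using ⟨hG₁, hG₂⟩, fun x y hxy => ?_⟩
    exact and_congr (hF₁ x y fun s hs => hxy s (by simp [hs]))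
      (hF₂ x y fun s hs => hxy s (by simp [hs]))

theorem exists_sampleClosure_subset_of_finset {F : Finset (Set (List A))}
    (hF : ∀ s ∈ F, ∃ d, 0 < d ∧ sampleClosure d s ⊆ s) :
    ∃ δ, 0 < δ ∧ ∀ s ∈ F, sampleClosure δ s ⊆ s := by
  choose! dOf hpos hclosed using hF
  refine ⟨∑ s ∈ F, dOf s + 1, by omega, fun s hs => ?_⟩
  have hle : dOf s ≤ ∑ s ∈ F, dOf s + 1 :=
    (Finset.single_le_sum (fun _ _ => Nat.zero_le _) hs).trans (Nat.le_succ _)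
  exact (sampleClosure_subset_of_le (hpos s hs) hle).trans (hclosed s hs)

theorem boolComb_of_diffChain_subset_nil {E n : ℕ} (hE : 0 < E) {L : Set (List A)}
    (hL : Language.IsRegular (L : Language A))
    (hn : diffChain (sampleClosureOperator E) L n ⊆ {[]}) :
    BoolComb (fun M => ∃ d : ℕ, 1 ≤ d ∧ Pi1RegDefinable A d M) L := by
  set P : Set (List A) → Prop := fun M => ∃ d : ℕ, 1 ≤ d ∧ Pi1RegDefinable A d M
  set K := diffChain (sampleClosureOperator E) L
  have hreg : ∀ m, Language.IsRegular (K m : Language A) := by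
    intro m
    induction m with
    | zero => exact hL
    | succ m ih => exact (isRegular_sampleClosure ih).inf ih.compl
  have hclosure : ∀ m, BoolComb P (sampleClosureOperator E (K m)) := fun m =>
    .base _ ⟨E, hE, pi1RegDefinable_sampleClosure (hreg m)⟩
  have hnil : BoolComb P ({[]} : Set (List A)) := sampleClosure_one_empty ▸
    .base _ ⟨1, le_rfl, pi1RegDefinable_sampleClosure (Set.inter_compl_self L ▸ hL.inf hL.compl)⟩
  have hlast : BoolComb P (K n) := by
    rcases Set.subset_singleton_iff_eq.mp hn with h | h
    · rw [h, ← Set.inter_compl_self {[]}]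
      exact .inter _ _ hnil (.compl _ hnil)
    · exact h ▸ hnil
  refine Nat.decreasingInduction (motive := fun m _ => BoolComb P (K m)) (fun m _ ih => ?_) hlast
    (Nat.zero_le n)
  rw [show K m = _ from diffChain_eq_closure_diff m, Set.sdiff_eq]
  exact .inter _ _ (hclosure m) (.compl _ ih)

end Collapse

theorem bsigma1_regular_collapse_general (A : Type)
    (L : Set (List A)) (hreg : Language.IsRegular (L : Language A))
    (h : BoolComb (fun M => ∃ d : ℕ, 1 ≤ d ∧ Pi1NDefinable A d M) L) :
    BoolComb (fun M => ∃ d : ℕ, 1 ≤ d ∧ Pi1RegDefinable A d M) L := by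
  obtain ⟨F, hFdef, hLF⟩ := h.exists_finset_determining
  obtain ⟨δ, hδ, hFδ⟩ := exists_sampleClosure_subset_of_finset fun s hs =>
    (hFdef s hs).imp fun _ hd => ⟨hd.1, hd.2.sampleClosure_subset⟩
  exact boolComb_of_diffChain_subset_nil (Nat.succ_pos _) hreg (diffChain_subset_nil hδ hFδ hLF)

theorem bsigma1_regular_collapse (A : Type) [Fintype A] [Nonempty A]
    (L : Set (List A)) (hreg : Language.IsRegular (L : Language A))
    (h : BoolComb (fun M => ∃ d : ℕ, 1 ≤ d ∧ Pi1NDefinable A d M) L) :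
    BoolComb (fun M => ∃ d : ℕ, 1 ≤ d ∧ Pi1RegDefinable A d M) L :=
  bsigma1_regular_collapse_general A L hreg h
end

section
/- Let A be a finite nonempty alphabet, d ≥ 1, L a regular language over A, and a : Fin d → A a tuple of letters. Then the d-ary numerical predicate R_a^L, defined by R_a^L(i, n) ↔ there exists v ∈ L with v.length = n and, for each j : Fin d, i j < n and the letter of v at position i j equals a j, is a regular numerical predicate. -/
open Finset in
theorem List.countP_eq_card_filter_univ {α : Type*} (l : List α) (p : α → Bool) :
    l.countP p = #{i : Fin l.length | p l[i]} := by
  induction l with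
  | nil => simp
  | cons x l ih =>
    rw [List.countP_cons, ih]
    simp only [List.length_cons, Fin.card_filter_univ_succ', add_comm]
    split_ifs <;> simp_all

theorem List.countP_eq_one_iff {α : Type*} (l : List α) (p : α → Bool) :
    l.countP p = 1 ↔ ∃ q : Fin l.length, ∀ i, p l[i] ↔ i = q := by
  simp [List.countP_eq_card_filter_univ, Finset.card_eq_one, Finset.ext_iff]

namespace Language

variable {α β : Type*}

theorem isRegular_top : (⊤ : Language α).IsRegular :=
  ⟨Unit, inferInstance, ⟨fun _ _ => (), (), Set.univ⟩, by ext; exact iff_of_true trivial trivial⟩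

theorem isRegular_iInf {ι : Type*} [Finite ι] {L : ι → Language α}
    (h : ∀ i, (L i).IsRegular) : (⨅ i, L i).IsRegular := by
  have := Fintype.ofFinite ι
  classical
  rw [← Finset.inf_univ_eq_iInf]
  induction (Finset.univ : Finset ι) using Finset.induction_on with
  | empty => exact isRegular_top
  | insert i s _ ih => rw [Finset.inf_insert]; exact (h i).inf ih

theorem isRegular_setOf_le_countP (p : α → Bool) (n : ℕ) :
    IsRegular ({w | n ≤ w.countP p} : Language α) := by
  let M : DFA α (Fin (n + 1)) :=
    { step := fun k b => if p b then ⟨min (k + 1) n, by omega⟩ else k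
      start := 0
      accept := {Fin.last n} }
  have eval_eq (w : List α) : (M.eval w : ℕ) = min (w.countP p) n := by
    induction w using List.reverseRecOn with
    | nil => simp [M]
    | append_singleton w b ih =>
      rw [DFA.eval_append_singleton, List.countP_append]
      simp only [M] at ih ⊢
      by_cases hb : p b
      · simp [hb, ih]
        omega
      · simp [hb, ih]
  refine ⟨Fin (n + 1), inferInstance, M, ?_⟩
  ext w
  change M.eval w = Fin.last n ↔ n ≤ w.countP p
  rw [Fin.ext_iff, eval_eq, Fin.val_last]
  omega

theorem isRegular_setOf_countP_eq (p : α → Bool) (n : ℕ) :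
    IsRegular ({w | w.countP p = n} : Language α) := by
  have : ({w | w.countP p = n} : Language α) =
      {w | n ≤ w.countP p} ⊓ {w | n + 1 ≤ w.countP p}ᶜ := by
    ext w
    show w.countP p = n ↔ n ≤ w.countP p ∧ ¬n + 1 ≤ w.countP p
    omega
  rw [this]
  exact (isRegular_setOf_le_countP p n).inf (isRegular_setOf_le_countP p (n + 1)).compl

def relMap (R : α → β → Prop) (L : Language α) : Language β :=
  {u | ∃ v ∈ L, List.Forall₂ R v u}

end Language

namespace DFA

variable {α β σ : Type*}

def relMapNFA (M : DFA α σ) (R : α → β → Prop) : NFA β σ where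
  step s b := {t | ∃ a, R a b ∧ M.step s a = t}
  start := {M.start}
  accept := M.accept

theorem mem_relMapNFA_evalFrom (M : DFA α σ) (R : α → β → Prop) {S : Set σ} {t : σ}
    {u : List β} :
    t ∈ (M.relMapNFA R).evalFrom S u ↔ ∃ s ∈ S, ∃ v, List.Forall₂ R v u ∧ M.evalFrom s v = t := by
  induction u generalizing S with
  | nil => simp [NFA.evalFrom_nil]
  | cons b u ih =>
    rw [NFA.evalFrom_cons, ih]
    simp only [NFA.mem_stepSet, relMapNFA, List.forall₂_cons_right_iff]
    constructor
    · rintro ⟨_, ⟨s, hs, a, hR, rfl⟩, v, hv, rfl⟩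
      exact ⟨s, hs, a :: v, ⟨a, v, hR, hv, rfl⟩, rfl⟩
    · rintro ⟨s, hs, _, ⟨a, v, hR, hv, rfl⟩, rfl⟩
      exact ⟨_, ⟨s, hs, a, hR, rfl⟩, v, hv, rfl⟩

theorem relMapNFA_accepts (M : DFA α σ) (R : α → β → Prop) :
    (M.relMapNFA R).accepts = M.accepts.relMap R := by
  ext u
  rw [NFA.mem_accepts, exists_congr fun _ => and_congr_right fun _ => mem_relMapNFA_evalFrom M R]
  constructor
  · rintro ⟨_, hacc, _, rfl, v, hv, rfl⟩
    exact ⟨v, hacc, hv⟩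
  · rintro ⟨v, hacc, hv⟩
    exact ⟨_, hacc, _, rfl, v, hv, rfl⟩

end DFA

theorem Language.IsRegular.relMap {α β : Type*} {L : Language α} (hL : L.IsRegular)
    (R : α → β → Prop) : (L.relMap R).IsRegular := by
  classical
  obtain ⟨σ, _, M, rfl⟩ := hL
  exact ⟨Set σ, inferInstance, (M.relMapNFA R).toDFA, by
    rw [NFA.toDFA_correct, M.relMapNFA_accepts]⟩

theorem numPredEncoding_eq_inf_relMap {A : Type*} {d : ℕ} (L : Language A) (a : Fin d → A) :
    NumPredEncoding (fun i n => ∃ v ∈ L, v.length = n ∧ ∀ j, i j < n ∧ v[i j]? = some (a j)) =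
      (⨅ j, {u | u.countP (j ∈ ·) = 1}) ⊓ L.relMap (fun b S => ∀ j ∈ S, b = a j) := by
  ext u
  simp only [NumPredEncoding, Language.relMap, List.get_eq_getElem]
  change _ ↔ u ∈ ⋂ j, _ ∧ _
  simp only [Set.mem_iInter, Set.mem_ofPred_eq, List.countP_eq_one_iff, decide_eq_true_eq]
  constructor
  · rintro ⟨p, hp, v, hvL, hlen, hv⟩
    refine ⟨fun j => ⟨p j, hp j⟩, v, hvL, List.forall₂_iff_get.2 ⟨hlen, fun k hkv hku j hj => ?_⟩⟩
    obtain rfl : k = p j := congrArg Fin.val ((hp j ⟨k, hku⟩).1 hj)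
    simpa [List.getElem?_eq_getElem hkv] using (hv j).2
  · rintro ⟨hunique, v, hvL, hv⟩
    choose p hp using hunique
    refine ⟨p, hp, v, hvL, hv.length_eq, fun j => ⟨(p j).isLt, ?_⟩⟩
    have hpv : (p j : ℕ) < v.length := hv.length_eq.symm ▸ (p j).isLt
    simpa [List.getElem?_eq_getElem hpv] using
      (List.forall₂_iff_get.1 hv).2 _ hpv (p j).isLt j ((hp j _).2 rfl)

theorem R_regular_general (A : Type) (d : ℕ)
    (L : Set (List A)) (hreg : Language.IsRegular (L : Language A)) (a : Fin d → A) :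
    IsRegularNumPred (fun (i : Fin d → ℕ) (n : ℕ) =>
      ∃ v ∈ L, v.length = n ∧ ∀ j : Fin d, i j < n ∧ v[i j]? = some (a j)) := by
  rw [IsRegularNumPred]
  convert (Language.isRegular_iInf fun j => Language.isRegular_setOf_countP_eq (j ∈ ·) 1).inf
    (hreg.relMap fun b (S : Finset (Fin d)) => ∀ j ∈ S, b = a j) using 1
  exact numPredEncoding_eq_inf_relMap L a

theorem R_regular (A : Type) [Fintype A] [Nonempty A] (d : ℕ) (hd : 1 ≤ d)
    (L : Set (List A)) (hreg : Language.IsRegular (L : Language A)) (a : Fin d → A) :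
    IsRegularNumPred (fun (i : Fin d → ℕ) (n : ℕ) =>
      ∃ v ∈ L, v.length = n ∧ ∀ j : Fin d, i j < n ∧ v[i j]? = some (a j)) :=
  R_regular_general A d L hreg a
end
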